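/- Let l, d be positive integers and C₀ ≥ 0, and let 1/2 < e⁻ ≤ e⁺ be real numbers. Let (α^k) be a sequence in M_{l×d}(ℂ), (β^k) a sequence in M_{l×d}(ℂ) with ‖β^k‖_F ≤ C₀ for all k, (e^k) a sequence of reals with e⁻ ≤ e^k ≤ e⁺, and (t_k) a sequence of nonnegative thresholds. Suppose for every k, α^{k+1} is obtained by applying entrywise hard thresholding at level t_k to the matrix (1 − 1/e^k)·α^k + (1/e^k)·β^k. Then the sequence (α^k) is bounded: there exists M such that ‖α^k‖_F ≤ M for all k. -/

import Mathlib

/-!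
Hard thresholding never increases the modulus of an entry, so it never increases the Frobenius
norm, and the triangle inequality gives `‖α^{k+1}‖ ≤ |1 - 1/e^k| ‖α^k‖ + (1/e^k) ‖β^k‖`.
Since `e^k` ranges over `[e⁻, e⁺]` with `e⁻ > 1/2`, the factor `|1 - 1/e^k|` is bounded by some
`ρ < 1` and `1/e^k < 2`, so `‖α^k‖` obeys the affine contraction `x_{k+1} ≤ ρ x_k + 2 C₀` and stays
below `max ‖α^0‖ (2 C₀ / (1 - ρ))`.
-/

open scoped Matrix.Norms.Frobenius

noncomputable def hardThreshold {α : Type*} [Norm α] [Zero α] (t : ℝ) (b : α) : α :=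
  if t < ‖b‖ then b else 0

theorem norm_hardThreshold_le {α : Type*} [SeminormedAddGroup α] (t : ℝ) (b : α) :
    ‖hardThreshold t b‖ ≤ ‖b‖ := by
  unfold hardThreshold
  split_ifs <;> simp

section Frobenius

variable {m n α : Type*} [Fintype m] [Fintype n] [SeminormedAddCommGroup α]

theorem Matrix.frobenius_norm_eq_sqrt (A : Matrix m n α) :
    ‖A‖ = √(∑ i, ∑ j, ‖A i j‖ ^ 2) := by
  simp only [Matrix.frobenius_norm_def, Real.sqrt_eq_rpow, Real.rpow_two]

theorem Matrix.frobenius_norm_le_of_forall_norm_le {A B : Matrix m n α}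
    (h : ∀ i j, ‖A i j‖ ≤ ‖B i j‖) : ‖A‖ ≤ ‖B‖ := by
  rw [A.frobenius_norm_eq_sqrt, B.frobenius_norm_eq_sqrt]
  gcongr with i _ j _
  exact h i j

theorem Matrix.frobenius_norm_map_hardThreshold_le (t : ℝ) (A : Matrix m n α) :
    ‖A.map (hardThreshold t)‖ ≤ ‖A‖ :=
  Matrix.frobenius_norm_le_of_forall_norm_le fun i j => norm_hardThreshold_le t (A i j)

end Frobenius

theorem norm_ofReal_smul_add_ofReal_smul_le {E : Type*} [SeminormedAddCommGroup E]
    [NormedSpace ℂ E] (r s : ℝ) (a b : E) :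
    ‖(r : ℂ) • a + (s : ℂ) • b‖ ≤ |r| * ‖a‖ + |s| * ‖b‖ := by
  simpa only [norm_smul, Complex.norm_real, Real.norm_eq_abs] using
    norm_add_le ((r : ℂ) • a) ((s : ℂ) • b)

theorem abs_one_sub_one_div_lt_one {x : ℝ} (hx : 1 / 2 < x) : |1 - 1 / x| < 1 := by
  have hx0 : 0 < x := by linarith
  have hinv : 1 / x < 2 := by rw [div_lt_iff₀ hx0]; linarith
  rw [abs_lt]
  constructor <;> linarith [one_div_pos.mpr hx0]

theorem abs_one_sub_one_div_le_max {a b x : ℝ} (ha : 0 < a) (hax : a ≤ x) (hxb : x ≤ b) :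
    |1 - 1 / x| ≤ max |1 - 1 / a| |1 - 1 / b| :=
  abs_le_max_abs_abs (by linarith [one_div_le_one_div_of_le ha hax])
    (by linarith [one_div_le_one_div_of_le (ha.trans_le hax) hxb])

theorem le_max_of_le_mul_add {x : ℕ → ℝ} {ρ c : ℝ} (hρ0 : 0 ≤ ρ) (hρ1 : ρ < 1)
    (h : ∀ k, x (k + 1) ≤ ρ * x k + c) (k : ℕ) : x k ≤ max (x 0) (c / (1 - ρ)) := by
  set M := max (x 0) (c / (1 - ρ))
  have hfix : ρ * M + c ≤ M := by
    have hc : c ≤ (1 - ρ) * M := by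
      rw [← div_le_iff₀' (by linarith)]
      exact le_max_right _ _
    linarith
  induction k with
  | zero => exact le_max_left _ _
  | succ k ih => exact (h k).trans (le_trans (by gcongr) hfix)

open Classical in
theorem palm_coefficients_bounded_general {l d : ℕ}
    (C₀ : ℝ) (em ep : ℝ) (hem : 1 / 2 < em) (hep : em ≤ ep)
    (α β : ℕ → Matrix (Fin l) (Fin d) ℂ)
    (hβ : ∀ k, Real.sqrt (∑ s : Fin l, ∑ t : Fin d, ‖β k s t‖ ^ 2) ≤ C₀)
    (e : ℕ → ℝ) (he : ∀ k, em ≤ e k ∧ e k ≤ ep)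
    (thr : ℕ → ℝ)
    (hupdate : ∀ k s t, α (k + 1) s t =
      if thr k <
          ‖(((1 - 1 / e k : ℝ) : ℂ) • α k + ((1 / e k : ℝ) : ℂ) • β k) s t‖
        then ((((1 - 1 / e k : ℝ) : ℂ) • α k + ((1 / e k : ℝ) : ℂ) • β k)) s t
        else 0) :
    ∃ M : ℝ, ∀ k,
      Real.sqrt (∑ s : Fin l, ∑ t : Fin d, ‖α k s t‖ ^ 2) ≤ M := by
  have hem0 : 0 < em := by linarith
  set ρ := max |1 - 1 / em| |1 - 1 / ep|
  have hρ0 : 0 ≤ ρ := (abs_nonneg _).trans (le_max_left _ _)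
  have hρ1 : ρ < 1 := max_lt (abs_one_sub_one_div_lt_one hem)
    (abs_one_sub_one_div_lt_one (hem.trans_le hep))
  have hstep : ∀ k, ‖α (k + 1)‖ ≤ ρ * ‖α k‖ + 2 * C₀ := by
    intro k
    obtain ⟨hek, hke⟩ := he k
    have hek0 : 0 < e k := hem0.trans_le hek
    have hdiv : |1 / e k| ≤ 2 := by
      rw [abs_of_pos (one_div_pos.mpr hek0), div_le_iff₀ hek0]; linarith
    have hβk : ‖β k‖ ≤ C₀ := (β k).frobenius_norm_eq_sqrt.trans_le (hβ k)
    calc ‖α (k + 1)‖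
        = ‖(((1 - 1 / e k : ℝ) : ℂ) • α k + ((1 / e k : ℝ) : ℂ) • β k).map
            (hardThreshold (thr k))‖ := congrArg norm (Matrix.ext (hupdate k))
      _ ≤ ‖((1 - 1 / e k : ℝ) : ℂ) • α k + ((1 / e k : ℝ) : ℂ) • β k‖ :=
          Matrix.frobenius_norm_map_hardThreshold_le _ _
      _ ≤ |1 - 1 / e k| * ‖α k‖ + |1 / e k| * ‖β k‖ :=
          norm_ofReal_smul_add_ofReal_smul_le _ _ _ _
      _ ≤ ρ * ‖α k‖ + 2 * C₀ := by
          gcongr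
          exact abs_one_sub_one_div_le_max hem0 hek hke
  refine ⟨max ‖α 0‖ (2 * C₀ / (1 - ρ)), fun k => ?_⟩
  rw [← Matrix.frobenius_norm_eq_sqrt]
  exact le_max_of_le_mul_add (x := fun k => ‖α k‖) hρ0 hρ1 hstep k

open Classical in
/-- Boundedness of the coefficient iterates of the PALM algorithm: if
`α^{k+1}` is obtained by entrywise hard thresholding of
`(1 − 1/e^k)·α^k + (1/e^k)·β^k` with `1/2 < e⁻ ≤ e^k ≤ e⁺` and `‖β^k‖_F ≤ C₀`,
then the sequence `(α^k)` is bounded in Frobenius norm. -/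
theorem palm_coefficients_bounded {l d : ℕ} (hl : 0 < l) (hd : 0 < d)
    (C₀ : ℝ) (hC₀ : 0 ≤ C₀) (em ep : ℝ) (hem : 1 / 2 < em) (hep : em ≤ ep)
    (α β : ℕ → Matrix (Fin l) (Fin d) ℂ)
    (hβ : ∀ k, Real.sqrt (∑ s : Fin l, ∑ t : Fin d, ‖β k s t‖ ^ 2) ≤ C₀)
    (e : ℕ → ℝ) (he : ∀ k, em ≤ e k ∧ e k ≤ ep)
    (thr : ℕ → ℝ) (hthr : ∀ k, 0 ≤ thr k)
    (hupdate : ∀ k s t, α (k + 1) s t =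
      if thr k <
          ‖(((1 - 1 / e k : ℝ) : ℂ) • α k + ((1 / e k : ℝ) : ℂ) • β k) s t‖
        then ((((1 - 1 / e k : ℝ) : ℂ) • α k + ((1 / e k : ℝ) : ℂ) • β k)) s t
        else 0) :
    ∃ M : ℝ, ∀ k,
      Real.sqrt (∑ s : Fin l, ∑ t : Fin d, ‖α k s t‖ ^ 2) ≤ M :=
  palm_coefficients_bounded_general C₀ em ep hem hep α β hβ e he thr hupdate
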